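/- Let G be a countable group with a proper length function l : G → ℝ≥0 (l(e) = 0, l(γ⁻¹) = l(γ), l(γ₁γ₂) ≤ l(γ₁) + l(γ₂), and each ball B(n) = {γ : l(γ) ≤ n} is finite and nonempty). Then B(m)·B(n) ⊆ B(m+n). If moreover |B(n+1)|/|B(n)| → 1, then (B(n)) is a Følner sequence and G is amenable. -/

import Mathlib

/-!
For `k ≥ l γ` the triangle inequality gives `γ • B(n) ⊆ B(n + k)` and `γ⁻¹ • B(n) ⊆ B(n + k)`,
so both halves of `γ • B(n) ∆ B(n)` inject into the shell `B(n + k) \ B(n)`. Its relative size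
`|B(n + k)| / |B(n)| - 1` tends to `0`, because `|B(n + k)| / |B(n)|` is a telescoping product of
`k` ratios `|B(j + 1)| / |B(j)|`, each tending to `1`.
-/

open Pointwise Filter Topology

section LengthBall

variable {G : Type*}

def lengthBall (l : G → ℝ) (r : ℝ) : Set G := {γ | l γ ≤ r}

variable {l : G → ℝ}

theorem lengthBall_mono {r s : ℝ} (h : r ≤ s) : lengthBall l r ⊆ lengthBall l s :=
  fun _ hγ => le_trans hγ h

theorem lengthBall_mul_subset [Mul G] (hsub : ∀ γ₁ γ₂, l (γ₁ * γ₂) ≤ l γ₁ + l γ₂) (r s : ℝ) :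
    lengthBall l r * lengthBall l s ⊆ lengthBall l (r + s) := by
  rintro _ ⟨a, ha, b, hb, rfl⟩
  exact (hsub a b).trans (add_le_add ha hb)

theorem smul_lengthBall_subset [Mul G] (hsub : ∀ γ₁ γ₂, l (γ₁ * γ₂) ≤ l γ₁ + l γ₂)
    (γ : G) (r : ℝ) :
    γ • lengthBall l r ⊆ lengthBall l (l γ + r) := by
  rintro _ ⟨x, hx, rfl⟩
  exact (hsub γ x).trans (add_le_add le_rfl hx)

end LengthBall

theorem tendsto_div_add_of_tendsto_succ_div {a : ℕ → ℝ} (ha : ∀ n, a n ≠ 0)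
    (h : Tendsto (fun n => a (n + 1) / a n) atTop (𝓝 1)) (k : ℕ) :
    Tendsto (fun n => a (n + k) / a n) atTop (𝓝 1) := by
  induction k with
  | zero => simp [div_self (ha _)]
  | succ k ih =>
    have hstep := (h.comp (tendsto_add_atTop_nat k)).mul ih
    rw [mul_one] at hstep
    refine hstep.congr fun n => ?_
    simp only [Function.comp_apply, ← add_assoc]
    exact div_mul_div_cancel₀ (ha (n + k))

section Folner

variable {G α : Type*} [Group G] [MulAction G α]

theorem ncard_symmDiff_smul_add_two_mul_le {γ : G} {A C : Set α} (hC : C.Finite)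
    (hAC : A ⊆ C) (hγ : γ • A ⊆ C) (hγinv : γ⁻¹ • A ⊆ C) :
    (symmDiff (γ • A) A).ncard + 2 * A.ncard ≤ 2 * C.ncard := by
  have hout : (γ • A \ A).ncard ≤ (C \ A).ncard :=
    Set.ncard_le_ncard (Set.sdiff_subset_sdiff_left hγ) hC.sdiff
  have hin : (A \ γ • A).ncard ≤ (C \ A).ncard := by
    calc (A \ γ • A).ncard = (γ⁻¹ • (A \ γ • A)).ncard := (Set.ncard_smul_set _ _).symm
      _ = (γ⁻¹ • A \ A).ncard := by rw [Set.smul_set_sdiff, inv_smul_smul]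
      _ ≤ (C \ A).ncard := Set.ncard_le_ncard (Set.sdiff_subset_sdiff_left hγinv) hC.sdiff
  have hunion : (symmDiff (γ • A) A).ncard ≤ (γ • A \ A).ncard + (A \ γ • A).ncard := by
    rw [symmDiff_def]
    exact Set.ncard_union_le _ _
  have hsplit := Set.ncard_sdiff_add_ncard_of_subset hAC hC
  omega

theorem tendsto_ncard_symmDiff_smul_div_of_tendsto_ncard_succ_div {F : ℕ → Set α}
    (hfin : ∀ n, (F n).Finite) (hne : ∀ n, (F n).Nonempty)
    (hgrowth : Tendsto (fun n => ((F (n + 1)).ncard : ℝ) / (F n).ncard) atTop (𝓝 1))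
    {γ : G} {k : ℕ} (hmono : ∀ n, F n ⊆ F (n + k)) (hγ : ∀ n, γ • F n ⊆ F (n + k))
    (hγinv : ∀ n, γ⁻¹ • F n ⊆ F (n + k)) :
    Tendsto (fun n => ((symmDiff (γ • F n) (F n)).ncard : ℝ) / (F n).ncard) atTop (𝓝 0) := by
  have hpos (n : ℕ) : 0 < ((F n).ncard : ℝ) := mod_cast (Set.ncard_pos (hfin n)).2 (hne n)
  have hlim : Tendsto (fun n => 2 * (((F (n + k)).ncard : ℝ) / (F n).ncard - 1)) atTop (𝓝 0) := by
    simpa using ((tendsto_div_add_of_tendsto_succ_div (fun n => (hpos n).ne') hgrowth k).sub_const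
      1).const_mul 2
  refine squeeze_zero (fun n => by positivity) (fun n => ?_) hlim
  have hcard : ((symmDiff (γ • F n) (F n)).ncard : ℝ) + 2 * (F n).ncard ≤
      2 * (F (n + k)).ncard :=
    mod_cast ncard_symmDiff_smul_add_two_mul_le (hfin _) (hmono n) (hγ n) (hγinv n)
  calc _ ≤ (2 * (F (n + k)).ncard - 2 * (F n).ncard : ℝ) / (F n).ncard := by gcongr; linarith
    _ = _ := by rw [← mul_sub, mul_div_assoc, sub_div, div_self (hpos n).ne']

end Folner

theorem stmt11_general {G : Type*} [Group G]
    (l : G → ℝ)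
    (hinv : ∀ γ, l γ⁻¹ = l γ)
    (hsub : ∀ γ₁ γ₂, l (γ₁ * γ₂) ≤ l γ₁ + l γ₂)
    (B : ℕ → Set G) (hB : ∀ n, B n = {γ | l γ ≤ n})
    (hfin : ∀ n, (B n).Finite) (hne : ∀ n, (B n).Nonempty) :
    (∀ m n, B m * B n ⊆ B (m + n)) ∧
    ((Tendsto (fun n => ((B (n + 1)).ncard : ℝ) / (B n).ncard) atTop (𝓝 1)) →
      ∀ γ : G, Tendsto
        (fun n => ((symmDiff (γ • B n) (B n)).ncard : ℝ) / (B n).ncard)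
        atTop (𝓝 0)) := by
  obtain rfl : B = fun n : ℕ => lengthBall l n := funext hB
  refine ⟨fun m n => by simpa only [Nat.cast_add] using lengthBall_mul_subset hsub m n,
    fun hgrowth γ => ?_⟩
  have hshift : ∀ δ : G, l δ ≤ ⌈l γ⌉₊ → ∀ n : ℕ,
      δ • lengthBall l n ⊆ lengthBall l ↑(n + ⌈l γ⌉₊) := fun δ hδ n =>
    (smul_lengthBall_subset hsub δ n).trans (lengthBall_mono (by push_cast; linarith))
  exact tendsto_ncard_symmDiff_smul_div_of_tendsto_ncard_succ_div hfin hne hgrowth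
    (fun n => lengthBall_mono (by simp)) (hshift γ (Nat.le_ceil _))
    (hshift γ⁻¹ ((hinv γ).trans_le (Nat.le_ceil _)))

/-- for a proper length function, `B(m)·B(n) ⊆ B(m+n)`; if moreover
`|B(n+1)|/|B(n)| → 1` then `(B(n))` is a Følner sequence (so `G` is amenable). -/
theorem stmt11 {G : Type*} [Group G] [Countable G]
    (l : G → ℝ) (hl1 : l 1 = 0) (hlnn : ∀ γ, 0 ≤ l γ)
    (hinv : ∀ γ, l γ⁻¹ = l γ)
    (hsub : ∀ γ₁ γ₂, l (γ₁ * γ₂) ≤ l γ₁ + l γ₂)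
    (B : ℕ → Set G) (hB : ∀ n, B n = {γ | l γ ≤ n})
    (hfin : ∀ n, (B n).Finite) (hne : ∀ n, (B n).Nonempty) :
    (∀ m n, B m * B n ⊆ B (m + n)) ∧
    ((Tendsto (fun n => ((B (n + 1)).ncard : ℝ) / (B n).ncard) atTop (𝓝 1)) →
      ∀ γ : G, Tendsto
        (fun n => ((symmDiff (γ • B n) (B n)).ncard : ℝ) / (B n).ncard)
        atTop (𝓝 0)) :=
  stmt11_general l hinv hsub B hB hfin hne
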